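/- arXiv:2107.01998 — 2 statements merged into one kernel-verified Lean document; each statement's English description precedes it below -/
import Mathlib

section
/- The axiom (◇A ⊃ □B) ⊃ □(A ⊃ B) is valid in all bi-relational models. -/
inductive Fml : Type where
  | atom : ℕ → Fml
  | bot : Fml
  | or : Fml → Fml → Fml
  | and : Fml → Fml → Fml
  | imp : Fml → Fml → Fml
  | dia : Fml → Fml
  | box : Fml → Fml

structure BiModel where
  W : Type
  ne : Nonempty W
  le : W → W → Prop
  R : W → W → Prop
  V : W → ℕ → Prop
  le_refl : ∀ w, le w w
  le_trans : ∀ w u v, le w u → le u v → le w v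
  F1 : ∀ w v v', R w v → le v v' → ∃ w', le w w' ∧ R w' v'
  F2 : ∀ w w' v, le w w' → R w v → ∃ v', R w' v' ∧ le v v'
  mono : ∀ w u p, le w u → V w p → V u p

def sat (M : BiModel) : M.W → Fml → Prop
  | w, .atom p => M.V w p
  | _, .bot => False
  | w, .or A B => sat M w A ∨ sat M w B
  | w, .and A B => sat M w A ∧ sat M w B
  | w, .imp A B => ∀ w', M.le w w' → sat M w' A → sat M w' B
  | w, .dia A => ∃ v, M.R w v ∧ sat M v A
  | w, .box A => ∀ w' v', M.le w w' → M.R w' v' → sat M v' A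

theorem dia_imp_box_valid (M : BiModel) (w : M.W) (A B : Fml) :
    sat M w (.imp (.imp (.dia A) (.box B)) (.box (.imp A B))) := by
  intro w1 hw1 hAB w2 v hw12 hR v2 hv2 hA
  obtain ⟨w3, hw23, hR3⟩ := M.F1 w2 v v2 hR hv2
  have hdia : sat M w3 (.dia A) := ⟨v2, hR3, hA⟩
  exact hAB w3 (M.le_trans _ _ _ hw12 hw23) hdia w3 v2 (M.le_refl _) hR3
end

section
/- Let n, k be natural numbers and let M be a bi-relational model whose accessibility relation R satisfies the Horn frame condition ∀w,u,v (wRⁿu ∧ wRᵏv → uRv), where Rⁿ denotes the n-fold composition of R (with R⁰ the identity). Then the Horn–Scott–Lemmon axiom (◇ⁿ□A ⊃ □ᵏA) ∧ (◇ᵏA ⊃ □ⁿ◇A) is globally true on M for every formula A. -/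
def RpowM (M : BiModel) : ℕ → M.W → M.W → Prop
  | 0, w, u => w = u
  | n+1, w, u => ∃ v, M.R w v ∧ RpowM M n v u

def diaN : ℕ → Fml → Fml
  | 0, A => A
  | n+1, A => .dia (diaN n A)

def boxN : ℕ → Fml → Fml
  | 0, A => A
  | n+1, A => .box (boxN n A)

lemma sat_mono (M : BiModel) (A : Fml) : ∀ w u, M.le w u → sat M w A → sat M u A := by
  induction A with
  | atom p => intro w u h hw; exact M.mono w u p h hw
  | bot => intro w u _ hw; exact hw
  | or A B ihA ihB => intro w u h hw
                      cases hw with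
                      | inl hA => exact Or.inl (ihA w u h hA)
                      | inr hB => exact Or.inr (ihB w u h hB)
  | and A B ihA ihB => intro w u h hw; exact ⟨ihA w u h hw.1, ihB w u h hw.2⟩
  | imp A B ihA ihB => intro w u h hw w' hw' hA
                       exact hw w' (M.le_trans w u w' h hw') hA
  | dia A ih => intro w u h hw
                obtain ⟨v, hR, hv⟩ := hw
                obtain ⟨v', hR', hle⟩ := M.F2 w u v h hR
                exact ⟨v', hR', ih v v' hle hv⟩
  | box A ih => intro w u h hw w' v' hw' hR
                exact hw w' v' (M.le_trans w u w' h hw') hR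

lemma diaN_sat (M : BiModel) (B : Fml) : ∀ n w, sat M w (diaN n B) → ∃ u, RpowM M n w u ∧ sat M u B := by
  intro n
  induction n with
  | zero => intro w h; exact ⟨w, rfl, h⟩
  | succ m ih => intro w h
                 obtain ⟨v, hR, hv⟩ := h
                 obtain ⟨u, hRp, hu⟩ := ih v hv
                 exact ⟨u, ⟨v, hR, hRp⟩, hu⟩

lemma Rpow_shift (M : BiModel) : ∀ n w w' u, M.le w w' → RpowM M n w u → ∃ u', RpowM M n w' u' ∧ M.le u u' := by
  intro n
  induction n with
  | zero => intro w w' u h hR; cases hR; exact ⟨w', rfl, h⟩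
  | succ m ih => intro w w' u h hR
                 obtain ⟨v, hR1, hRp⟩ := hR
                 obtain ⟨v', hR1', hle⟩ := M.F2 w w' v h hR1
                 obtain ⟨u', hRp', hle'⟩ := ih v v' u hle hRp
                 exact ⟨u', ⟨v', hR1', hRp'⟩, hle'⟩

lemma boxN_intro (M : BiModel) (B : Fml) : ∀ k w, (∀ w' v, M.le w w' → RpowM M k w' v → sat M v B) → sat M w (boxN k B) := by
  intro k
  induction k with
  | zero => intro w h; exact h w w (M.le_refl w) rfl
  | succ m ih => intro w h w' v hle hR
                 apply ih
                 intro w'' u hle2 hRp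
                 obtain ⟨w₃, hle3, hR3⟩ := M.F1 w' v w'' hR hle2
                 exact h w₃ u (M.le_trans w w' w₃ hle hle3) ⟨w'', hR3, hRp⟩

theorem hsl_globally_true (n k : ℕ) (M : BiModel)
    (hframe : ∀ w u v : M.W, RpowM M n w u → RpowM M k w v → M.R u v)
    (A : Fml) (w : M.W) :
    sat M w (.and (.imp (diaN n (.box A)) (boxN k A))
                  (.imp (diaN k A) (boxN n (.dia A)))) := by
  constructor
  · intro w' _ h
    obtain ⟨u, hRn, hu⟩ := diaN_sat M (.box A) n w' h
    apply boxN_intro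
    intro w'' v hle hRk
    obtain ⟨u', hRn', hleu⟩ := Rpow_shift M n w' w'' u hle hRn
    have hRuv := hframe w'' u' v hRn' hRk
    exact sat_mono M (.box A) u u' hleu hu u' v (M.le_refl u') hRuv
  · intro w' _ h
    obtain ⟨v, hRk, hv⟩ := diaN_sat M A k w' h
    apply boxN_intro
    intro w'' u hle hRn
    obtain ⟨v', hRk', hlev⟩ := Rpow_shift M k w' w'' v hle hRk
    exact ⟨v', hframe w'' u v' hRn hRk', sat_mono M A v v' hlev hv⟩
end
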